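/- arXiv:1212.3970 — 2 statements merged into one kernel-verified Lean document; each statement's English description precedes it below -/
import Mathlib

section
/- Let S be an m×k matrix over 𝔽₂ with rows S¹,…,Sᵐ ∈ 𝔽₂ᵏ. Then S satisfies condition (A2) for K if and only if the following condition (A2*) holds: for every nonzero vector a ∈ 𝔽₂ᵏ there exists a minimal non-simplex ω(a) ∈ N(K) such that ⟨a, Sⁱ⟩ = 1 in 𝔽₂ for every i ∈ ω(a), where ⟨·,·⟩ denotes the standard bilinear form on 𝔽₂ᵏ. -/
/-! The rows outside `σ` span `𝔽₂ᵏ` iff no nonzero `a` is orthogonal to all of them, i.e. iff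
the set `{i | ⟨a, Sⁱ⟩ = 1}` is not contained in `σ`. Asking this for every simplex `σ` says that
this set is a non-simplex, and a non-simplex is exactly a set containing a minimal one. -/

/-- `K` is an abstract simplicial complex on the vertex set `[m]`:
it contains the empty set and is closed under taking subsets. -/
def IsSimplicialComplex (m : ℕ) (K : Set (Finset (Fin m))) : Prop :=
  ∅ ∈ K ∧ ∀ σ ∈ K, ∀ τ ⊆ σ, τ ∈ K

/-- `ω` is a minimal non-simplex of `K`: `ω ∉ K` but every proper subset of `ω` is in `K`. -/
def MinimalNonSimplex (m : ℕ) (K : Set (Finset (Fin m))) (ω : Finset (Fin m)) : Prop :=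
  ω ∉ K ∧ ∀ τ ⊂ ω, τ ∈ K

/-- Condition (A): for every simplex `σ ∈ K` the rows `{Sⁱ : i ∉ σ}`
generate `ℤᵏ` as an abelian group. -/
def CondA (m k : ℕ) (K : Set (Finset (Fin m))) (S : Matrix (Fin m) (Fin k) ℤ) : Prop :=
  ∀ σ ∈ K, Submodule.span ℤ ((fun i => S i) '' {i : Fin m | i ∉ σ}) = ⊤

/-- Condition (A2): for every simplex `σ ∈ K` the rows `{Sⁱ : i ∉ σ}` span `𝔽₂ᵏ`. -/
def CondA2 (m k : ℕ) (K : Set (Finset (Fin m))) (S : Matrix (Fin m) (Fin k) (ZMod 2)) : Prop :=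
  ∀ σ ∈ K, Submodule.span (ZMod 2) ((fun i => S i) '' {i : Fin m | i ∉ σ}) = ⊤

open Matrix

theorem Submodule.span_eq_top_iff_forall_dotProduct_eq_zero {F ι : Type*} [Field F] [Fintype ι]
    (s : Set (ι → F)) :
    span F s = ⊤ ↔ ∀ a : ι → F, (∀ v ∈ s, a ⬝ᵥ v = 0) → a = 0 := by
  classical
  rw [← dualAnnihilator_eq_bot_iff, Submodule.eq_bot_iff,
    (dotProductEquiv F ι).symm.forall_congr_left]
  simp only [← SetLike.mem_coe, coe_dualAnnihilator_span]
  simp [Set.subset_def]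

theorem exists_minimalNonSimplex_subset {m : ℕ} (K : Set (Finset (Fin m)))
    {T : Finset (Fin m)} (hT : T ∉ K) : ∃ ω ⊆ T, MinimalNonSimplex m K ω := by
  obtain ⟨ω, hωT, hω⟩ := exists_minimal_le_of_wellFoundedLT (· ∉ K) T hT
  exact ⟨ω, hωT, hω.prop, fun τ hτ => not_not.mp (hω.not_prop_of_lt hτ)⟩

theorem IsSimplicialComplex.exists_mem_notMem_of_notMem {m : ℕ} {K : Set (Finset (Fin m))}
    (hK : IsSimplicialComplex m K) {σ ω : Finset (Fin m)} (hσ : σ ∈ K) (hω : ω ∉ K) :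
    ∃ i ∈ ω, i ∉ σ := by
  by_contra! h
  exact hω (hK.2 σ hσ ω h)

theorem ZMod.eq_zero_of_ne_one_two {x : ZMod 2} (h : x ≠ 1) : x = 0 := by
  by_contra h0
  exact h (Fin.eq_one_of_ne_zero x h0)

/-- Condition (A2) is equivalent to condition (A2*): for every nonzero `a ∈ 𝔽₂ᵏ` there is
a minimal non-simplex `ω(a) ∈ N(K)` with `⟨a, Sⁱ⟩ = 1` for all `i ∈ ω(a)`. -/
theorem stmt_8 (m k : ℕ) (K : Set (Finset (Fin m))) (hK : IsSimplicialComplex m K)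
    (S : Matrix (Fin m) (Fin k) (ZMod 2)) :
    CondA2 m k K S ↔
      ∀ a : Fin k → ZMod 2, a ≠ 0 →
        ∃ ω : Finset (Fin m), MinimalNonSimplex m K ω ∧
          ∀ i ∈ ω, (∑ j, a j * S i j) = 1 := by
  simp only [CondA2, Submodule.span_eq_top_iff_forall_dotProduct_eq_zero, Set.forall_mem_image]
  constructor
  · intro hA2 a ha
    set T := Finset.univ.filter fun i => a ⬝ᵥ S i = 1
    have hT : T ∉ K := fun hT =>
      ha (hA2 T hT a fun i hi => ZMod.eq_zero_of_ne_one_two (by simpa [T] using hi))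
    obtain ⟨ω, hωT, hω⟩ := exists_minimalNonSimplex_subset K hT
    exact ⟨ω, hω, fun i hi => (Finset.mem_filter.mp (hωT hi)).2⟩
  · intro hA2star σ hσ a ha
    by_contra ha0
    obtain ⟨ω, hω, hωa⟩ := hA2star a ha0
    obtain ⟨i, hiω, hiσ⟩ := hK.exists_mem_notMem_of_notMem hσ hω.1
    exact one_ne_zero ((hωa i hiω).symm.trans (ha hiσ))
end

section
/- s(K) ≥ 2 (i.e., there exists an m×2 integer matrix satisfying condition (A) for K) if and only if condition (S2) holds: either (1) there exist pairwise distinct τ₁, τ₂, τ₃ ∈ N(K) with τ₁ ∩ τ₂ ∩ τ₃ = ∅, or (2) there exist distinct τ₁, τ₂ ∈ N(K) with τ₁ ∩ τ₂ = ∅. -/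
/-- Condition (S2): `N(K)` contains two disjoint elements, or three pairwise distinct
elements with empty common intersection. -/
def CondS2 (m : ℕ) (K : Set (Finset (Fin m))) : Prop :=
  (∃ τ₁ τ₂ τ₃ : Finset (Fin m), MinimalNonSimplex m K τ₁ ∧ MinimalNonSimplex m K τ₂ ∧
    MinimalNonSimplex m K τ₃ ∧ τ₁ ≠ τ₂ ∧ τ₁ ≠ τ₃ ∧ τ₂ ≠ τ₃ ∧ τ₁ ∩ τ₂ ∩ τ₃ = ∅) ∨
  (∃ τ₁ τ₂ : Finset (Fin m), MinimalNonSimplex m K τ₁ ∧ MinimalNonSimplex m K τ₂ ∧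
    τ₁ ≠ τ₂ ∧ τ₁ ∩ τ₂ = ∅)

/-- Condition (S3): `N(K)` contains one of five configurations of pairwise distinct
elements described in Proposition (S3). -/
def CondS3 (m : ℕ) (K : Set (Finset (Fin m))) : Prop :=
  (∃ τ₁ τ₂ τ₃ τ₄ τ₅ τ₆ τ₇ : Finset (Fin m),
    (∀ τ ∈ [τ₁, τ₂, τ₃, τ₄, τ₅, τ₆, τ₇], MinimalNonSimplex m K τ) ∧
    [τ₁, τ₂, τ₃, τ₄, τ₅, τ₆, τ₇].Pairwise (· ≠ ·) ∧
    τ₁ ∩ τ₂ ∩ τ₄ = ∅ ∧ τ₁ ∩ τ₃ ∩ τ₅ = ∅ ∧ τ₁ ∩ τ₆ ∩ τ₇ = ∅ ∧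
    τ₂ ∩ τ₃ ∩ τ₆ = ∅ ∧ τ₂ ∩ τ₅ ∩ τ₇ = ∅ ∧ τ₃ ∩ τ₄ ∩ τ₇ = ∅ ∧ τ₄ ∩ τ₅ ∩ τ₆ = ∅) ∨
  (∃ τ₁ τ₂ τ₃ τ₄ τ₅ τ₆ : Finset (Fin m),
    (∀ τ ∈ [τ₁, τ₂, τ₃, τ₄, τ₅, τ₆], MinimalNonSimplex m K τ) ∧
    [τ₁, τ₂, τ₃, τ₄, τ₅, τ₆].Pairwise (· ≠ ·) ∧
    τ₁ ∩ τ₃ = ∅ ∧ τ₁ ∩ τ₂ ∩ τ₄ = ∅ ∧ τ₁ ∩ τ₂ ∩ τ₅ = ∅ ∧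
    τ₁ ∩ τ₄ ∩ τ₆ = ∅ ∧ τ₁ ∩ τ₅ ∩ τ₆ = ∅ ∧ τ₂ ∩ τ₃ ∩ τ₆ = ∅ ∧ τ₃ ∩ τ₄ ∩ τ₅ = ∅) ∨
  (∃ τ₁ τ₂ τ₃ τ₄ τ₅ : Finset (Fin m),
    (∀ τ ∈ [τ₁, τ₂, τ₃, τ₄, τ₅], MinimalNonSimplex m K τ) ∧
    [τ₁, τ₂, τ₃, τ₄, τ₅].Pairwise (· ≠ ·) ∧
    τ₁ ∩ τ₂ = ∅ ∧ τ₁ ∩ τ₅ = ∅ ∧ τ₁ ∩ τ₃ ∩ τ₄ = ∅ ∧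
    τ₂ ∩ τ₃ ∩ τ₅ = ∅ ∧ τ₂ ∩ τ₄ ∩ τ₅ = ∅) ∨
  (∃ τ₁ τ₂ τ₃ τ₄ : Finset (Fin m),
    (∀ τ ∈ [τ₁, τ₂, τ₃, τ₄], MinimalNonSimplex m K τ) ∧
    [τ₁, τ₂, τ₃, τ₄].Pairwise (· ≠ ·) ∧
    τ₁ ∩ (τ₂ ∪ τ₃ ∪ τ₄) = ∅ ∧ τ₂ ∩ τ₃ ∩ τ₄ = ∅) ∨
  (∃ τ₁ τ₂ τ₃ : Finset (Fin m),
    (∀ τ ∈ [τ₁, τ₂, τ₃], MinimalNonSimplex m K τ) ∧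
    [τ₁, τ₂, τ₃].Pairwise (· ≠ ·) ∧
    τ₁ ∩ τ₂ = ∅ ∧ τ₁ ∩ τ₃ = ∅ ∧ τ₂ ∩ τ₃ = ∅)

abbrev va : Fin 2 → ℤ := ![1, 0]
abbrev vb : Fin 2 → ℤ := ![0, 1]
abbrev vc : Fin 2 → ℤ := ![1, 1]

lemma span_top_of_e {s : Set (Fin 2 → ℤ)}
    (h0 : va ∈ Submodule.span ℤ s) (h1 : vb ∈ Submodule.span ℤ s) :
    Submodule.span ℤ s = ⊤ := by
  rw [eq_top_iff]
  intro v _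
  have hv : v = v 0 • va + v 1 • vb := by
    ext i; fin_cases i <;> simp
  rw [hv]
  exact add_mem (Submodule.smul_mem _ _ h0) (Submodule.smul_mem _ _ h1)

lemma span_pair (x y : Fin 2 → ℤ)
    (h : (x = va ∧ y = vb) ∨ (x = va ∧ y = vc) ∨ (x = vb ∧ y = vc))
    {s : Set (Fin 2 → ℤ)} (hx : x ∈ s) (hy : y ∈ s) :
    Submodule.span ℤ s = ⊤ := by
  have hx' := Submodule.subset_span (R := ℤ) hx
  have hy' := Submodule.subset_span (R := ℤ) hy
  rcases h with ⟨rfl, rfl⟩ | ⟨rfl, rfl⟩ | ⟨rfl, rfl⟩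
  · exact span_top_of_e hx' hy'
  · refine span_top_of_e hx' ?_
    have hb : vb = vc - va := by ext i; fin_cases i <;> simp
    rw [hb]; exact sub_mem hy' hx'
  · refine span_top_of_e ?_ hx'
    have ha : va = vc - vb := by ext i; fin_cases i <;> simp
    rw [ha]; exact sub_mem hy' hx'

def red : (Fin 2 → ℤ) →ₗ[ℤ] (Fin 2 → ZMod 2) where
  toFun v := fun j => (v j : ZMod 2)
  map_add' u v := by ext j; simp
  map_smul' z v := by ext j; simp [Pi.smul_apply, zsmul_eq_mul]

lemma red_surj : Function.Surjective red := by
  intro w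
  refine ⟨fun j => ((w j).val : ℤ), ?_⟩
  ext j
  simp [red, ZMod.intCast_cast, ZMod.natCast_val, ZMod.cast_id]

lemma span_mod2 {T : Set (Fin 2 → ℤ)} (h : Submodule.span ℤ T = ⊤) :
    Submodule.span (ZMod 2) (red '' T) = ⊤ := by
  have h1 : Submodule.span ℤ (red '' T) = ⊤ := by
    rw [Submodule.span_image, h, Submodule.map_top, LinearMap.range_eq_top]
    exact red_surj
  rw [eq_top_iff]
  intro x _
  have hx : x ∈ Submodule.span ℤ (red '' T) := by rw [h1]; trivial
  exact Submodule.span_le_restrictScalars ℤ (ZMod 2) (red '' T) hx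



lemma exists_min (m : ℕ) (K : Set (Finset (Fin m))) :
    ∀ M : Finset (Fin m), M ∉ K → ∃ τ, τ ⊆ M ∧ MinimalNonSimplex m K τ := by
  intro M
  induction M using Finset.strongInductionOn with
  | _ M ih =>
    intro hM
    by_cases h : ∀ τ, τ ⊂ M → τ ∈ K
    · exact ⟨M, subset_rfl, hM, h⟩
    · push_neg at h
      obtain ⟨τ, hss, hτ⟩ := h
      obtain ⟨τ', h1, h2⟩ := ih τ hss hτ
      exact ⟨τ', h1.trans hss.subset, h2⟩

abbrev wa : Fin 2 → ZMod 2 := ![1, 0]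
abbrev wb : Fin 2 → ZMod 2 := ![0, 1]
abbrev wc : Fin 2 → ZMod 2 := ![1, 1]

example : ∀ t : ZMod 2, t • wb ≠ wa := by decide
example : ∀ v : Fin 2 → ZMod 2, v = 0 ∨ v = wa ∨ v = wb ∨ v = wc := by decide



theorem stmt14_fwd (m : ℕ) (K : Set (Finset (Fin m))) (hK : IsSimplicialComplex m K)
    (S : Matrix (Fin m) (Fin 2) ℤ) (hS : CondA m 2 K S) : CondS2 m K := by
  classical
  set f : Fin m → (Fin 2 → ZMod 2) := fun i => red (S i) with hf
  have hP : ∀ σ ∈ K, Submodule.span (ZMod 2) (f '' {i | i ∉ σ}) = ⊤ := by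
    intro σ hσ
    have h := span_mod2 (hS σ hσ)
    rwa [Set.image_image] at h
  -- the three "forbidden" sets
  have hM : ∀ x y : Fin 2 → ZMod 2, (∀ t : ZMod 2, t • x ≠ y) →
      (Finset.univ.filter (fun i => f i ≠ 0 ∧ f i ≠ x)) ∉ K := by
    intro x y hy hmem
    have h1 := hP _ hmem
    have h2 : f '' {i | i ∉ Finset.univ.filter (fun i => f i ≠ 0 ∧ f i ≠ x)} ⊆
        (Submodule.span (ZMod 2) {x} : Set (Fin 2 → ZMod 2)) := by
      rintro _ ⟨i, hi, rfl⟩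
      simp only [Set.mem_setOf_eq, Finset.mem_filter, Finset.mem_univ, true_and, not_and,
        not_not] at hi
      by_cases h0 : f i = 0
      · rw [h0]; exact Submodule.zero_mem _
      · rw [hi h0]; exact Submodule.mem_span_singleton_self x
    have h3 : Submodule.span (ZMod 2)
        (f '' {i | i ∉ Finset.univ.filter (fun i => f i ≠ 0 ∧ f i ≠ x)}) ≤
        Submodule.span (ZMod 2) {x} := Submodule.span_le.2 h2
    rw [h1] at h3
    obtain ⟨t, ht⟩ := Submodule.mem_span_singleton.1 (h3 (Submodule.mem_top (x := y)))
    exact hy t ht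
  obtain ⟨τ₁, hτ₁M, hτ₁⟩ := exists_min m K _ (hM wa wb (by decide))
  obtain ⟨τ₂, hτ₂M, hτ₂⟩ := exists_min m K _ (hM wb wa (by decide))
  obtain ⟨τ₃, hτ₃M, hτ₃⟩ := exists_min m K _ (hM wc wa (by decide))
  have hall : ∀ v : Fin 2 → ZMod 2, v = 0 ∨ v = wa ∨ v = wb ∨ v = wc := by decide
  have hlab : ∀ x : Fin 2 → ZMod 2, ∀ τ, τ ⊆ Finset.univ.filter (fun i => f i ≠ 0 ∧ f i ≠ x) →
      ∀ i ∈ τ, f i ≠ 0 ∧ f i ≠ x := by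
    intro x τ hτ i hi
    have := hτ hi
    simpa using this
  have l1 := hlab wa τ₁ hτ₁M
  have l2 := hlab wb τ₂ hτ₂M
  have l3 := hlab wc τ₃ hτ₃M
  -- helper: disjointness and distinctness from labels
  have hdisj : ∀ (τ τ' : Finset (Fin m)) (x : Fin 2 → ZMod 2),
      (∀ i ∈ τ, f i = x) → (∀ i ∈ τ', f i ≠ x) → τ ∩ τ' = ∅ := by
    intro τ τ' x h1 h2
    rw [Finset.eq_empty_iff_forall_notMem]
    intro i hi
    rw [Finset.mem_inter] at hi
    exact h2 i hi.2 (h1 i hi.1)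
  have hne : ∀ (τ τ' : Finset (Fin m)), MinimalNonSimplex m K τ → τ ∩ τ' = ∅ → τ ≠ τ' := by
    intro τ τ' hmin hint heq
    subst heq
    rw [Finset.inter_self] at hint
    rw [hint] at hmin
    exact hmin.1 hK.1
  by_cases h12 : τ₁ = τ₂
  · -- τ₁ has labels = wc, τ₃ has labels ≠ wc
    have hc : ∀ i ∈ τ₁, f i = wc := by
      intro i hi
      rcases hall (f i) with h | h | h | h
      · exact absurd h (l1 i hi).1
      · exact absurd h (l1 i hi).2
      · exact absurd h (l2 i (h12 ▸ hi)).2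
      · exact h
    have hint : τ₁ ∩ τ₃ = ∅ := hdisj τ₁ τ₃ wc hc (fun i hi => (l3 i hi).2)
    exact Or.inr ⟨τ₁, τ₃, hτ₁, hτ₃, hne τ₁ τ₃ hτ₁ hint, hint⟩
  by_cases h13 : τ₁ = τ₃
  · have hb : ∀ i ∈ τ₁, f i = wb := by
      intro i hi
      rcases hall (f i) with h | h | h | h
      · exact absurd h (l1 i hi).1
      · exact absurd h (l1 i hi).2
      · exact h
      · exact absurd h (l3 i (h13 ▸ hi)).2
    have hint : τ₁ ∩ τ₂ = ∅ := hdisj τ₁ τ₂ wb hb (fun i hi => (l2 i hi).2)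
    exact Or.inr ⟨τ₁, τ₂, hτ₁, hτ₂, hne τ₁ τ₂ hτ₁ hint, hint⟩
  by_cases h23 : τ₂ = τ₃
  · have ha : ∀ i ∈ τ₂, f i = wa := by
      intro i hi
      rcases hall (f i) with h | h | h | h
      · exact absurd h (l2 i hi).1
      · exact h
      · exact absurd h (l2 i hi).2
      · exact absurd h (l3 i (h23 ▸ hi)).2
    have hint : τ₂ ∩ τ₁ = ∅ := hdisj τ₂ τ₁ wa ha (fun i hi => (l1 i hi).2)
    have hint' : τ₁ ∩ τ₂ = ∅ := by rwa [Finset.inter_comm] at hint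
    exact Or.inr ⟨τ₁, τ₂, hτ₁, hτ₂, fun h => hne τ₂ τ₁ hτ₂ hint h.symm, hint'⟩
  · refine Or.inl ⟨τ₁, τ₂, τ₃, hτ₁, hτ₂, hτ₃, h12, h13, h23, ?_⟩
    rw [Finset.eq_empty_iff_forall_notMem]
    intro i hi
    simp only [Finset.mem_inter] at hi
    obtain ⟨⟨hi1, hi2⟩, hi3⟩ := hi
    rcases hall (f i) with h | h | h | h
    · exact (l1 i hi1).1 h
    · exact (l1 i hi1).2 h
    · exact (l2 i hi2).2 h
    · exact (l3 i hi3).2 h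

theorem stmt14_bwd (m : ℕ) (K : Set (Finset (Fin m))) (hK : IsSimplicialComplex m K)
    (h : CondS2 m K) : ∃ S : Matrix (Fin m) (Fin 2) ℤ, CondA m 2 K S := by
  classical
  have hmiss : ∀ τ : Finset (Fin m), MinimalNonSimplex m K τ → ∀ σ ∈ K, ∃ i ∈ τ, i ∉ σ := by
    intro τ hτ σ hσ
    by_contra hcon
    push_neg at hcon
    exact hτ.1 (hK.2 σ hσ τ hcon)
  rcases h with ⟨τ₁, τ₂, τ₃, hτ₁, hτ₂, hτ₃, _, _, _, htri⟩ | ⟨τ₁, τ₂, hτ₁, hτ₂, _, hdis⟩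
  · -- three with empty triple intersection
    have htr : ∀ i : Fin m, i ∈ τ₁ → i ∈ τ₂ → i ∈ τ₃ → False := by
      intro i h1 h2 h3
      have : i ∈ τ₁ ∩ τ₂ ∩ τ₃ := by simp [Finset.mem_inter, h1, h2, h3]
      rw [htri] at this
      simp at this
    refine ⟨Matrix.of (fun i => if i ∈ τ₁ ∧ i ∉ τ₃ then va else
      if i ∈ τ₂ ∧ i ∉ τ₁ then vb else if i ∈ τ₃ ∧ i ∉ τ₂ then vc else 0), ?_⟩
    intro σ hσ
    obtain ⟨i₁, hi₁, hi₁σ⟩ := hmiss τ₁ hτ₁ σ hσ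
    obtain ⟨i₂, hi₂, hi₂σ⟩ := hmiss τ₂ hτ₂ σ hσ
    obtain ⟨i₃, hi₃, hi₃σ⟩ := hmiss τ₃ hτ₃ σ hσ
    set S := Matrix.of (fun i => if i ∈ τ₁ ∧ i ∉ τ₃ then va else
      if i ∈ τ₂ ∧ i ∉ τ₁ then vb else if i ∈ τ₃ ∧ i ∉ τ₂ then vc else 0) with hSdef
    have mem₁ : S i₁ ∈ (fun i => S i) '' {i | i ∉ σ} := Set.mem_image_of_mem _ hi₁σ
    have mem₂ : S i₂ ∈ (fun i => S i) '' {i | i ∉ σ} := Set.mem_image_of_mem _ hi₂σ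
    have mem₃ : S i₃ ∈ (fun i => S i) '' {i | i ∉ σ} := Set.mem_image_of_mem _ hi₃σ
    have h1 : S i₁ = va ∨ S i₁ = vc := by
      by_cases h : i₁ ∈ τ₃
      · right
        have hn2 : i₁ ∉ τ₂ := fun h2 => htr i₁ hi₁ h2 h
        show (if i₁ ∈ τ₁ ∧ i₁ ∉ τ₃ then va else if i₁ ∈ τ₂ ∧ i₁ ∉ τ₁ then vb else if i₁ ∈ τ₃ ∧ i₁ ∉ τ₂ then vc else 0) = vc
        simp [hi₁, h, hn2]
      · left
        show (if i₁ ∈ τ₁ ∧ i₁ ∉ τ₃ then va else if i₁ ∈ τ₂ ∧ i₁ ∉ τ₁ then vb else if i₁ ∈ τ₃ ∧ i₁ ∉ τ₂ then vc else 0) = va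
        simp [hi₁, h]
    have h2 : S i₂ = va ∨ S i₂ = vb := by
      by_cases h : i₂ ∈ τ₁
      · left
        have hn3 : i₂ ∉ τ₃ := fun h3 => htr i₂ h hi₂ h3
        show (if i₂ ∈ τ₁ ∧ i₂ ∉ τ₃ then va else if i₂ ∈ τ₂ ∧ i₂ ∉ τ₁ then vb else if i₂ ∈ τ₃ ∧ i₂ ∉ τ₂ then vc else 0) = va
        simp [h, hn3]
      · right
        show (if i₂ ∈ τ₁ ∧ i₂ ∉ τ₃ then va else if i₂ ∈ τ₂ ∧ i₂ ∉ τ₁ then vb else if i₂ ∈ τ₃ ∧ i₂ ∉ τ₂ then vc else 0) = vb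
        simp [hi₂, h]
    have h3 : S i₃ = vb ∨ S i₃ = vc := by
      by_cases h : i₃ ∈ τ₂
      · left
        have hn1 : i₃ ∉ τ₁ := fun h1 => htr i₃ h1 h hi₃
        show (if i₃ ∈ τ₁ ∧ i₃ ∉ τ₃ then va else if i₃ ∈ τ₂ ∧ i₃ ∉ τ₁ then vb else if i₃ ∈ τ₃ ∧ i₃ ∉ τ₂ then vc else 0) = vb
        simp [hi₃, h, hn1]
      · right
        show (if i₃ ∈ τ₁ ∧ i₃ ∉ τ₃ then va else if i₃ ∈ τ₂ ∧ i₃ ∉ τ₁ then vb else if i₃ ∈ τ₃ ∧ i₃ ∉ τ₂ then vc else 0) = vc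
        simp [hi₃, h]
    rcases h1 with e1 | e1
    · rcases h2 with e2 | e2
      · rcases h3 with e3 | e3
        · exact span_pair va vb (Or.inl ⟨rfl, rfl⟩) (e1 ▸ mem₁) (e3 ▸ mem₃)
        · exact span_pair va vc (Or.inr (Or.inl ⟨rfl, rfl⟩)) (e1 ▸ mem₁) (e3 ▸ mem₃)
      · exact span_pair va vb (Or.inl ⟨rfl, rfl⟩) (e1 ▸ mem₁) (e2 ▸ mem₂)
    · rcases h2 with e2 | e2
      · exact span_pair va vc (Or.inr (Or.inl ⟨rfl, rfl⟩)) (e2 ▸ mem₂) (e1 ▸ mem₁)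
      · exact span_pair vb vc (Or.inr (Or.inr ⟨rfl, rfl⟩)) (e2 ▸ mem₂) (e1 ▸ mem₁)
  · -- two disjoint
    refine ⟨Matrix.of (fun i => if i ∈ τ₁ then va else if i ∈ τ₂ then vb else 0), ?_⟩
    intro σ hσ
    obtain ⟨i₁, hi₁, hi₁σ⟩ := hmiss τ₁ hτ₁ σ hσ
    obtain ⟨i₂, hi₂, hi₂σ⟩ := hmiss τ₂ hτ₂ σ hσ
    set S := Matrix.of (fun i => if i ∈ τ₁ then va else if i ∈ τ₂ then vb else 0) with hSdef
    have mem₁ : S i₁ ∈ (fun i => S i) '' {i | i ∉ σ} := Set.mem_image_of_mem _ hi₁σ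
    have mem₂ : S i₂ ∈ (fun i => S i) '' {i | i ∉ σ} := Set.mem_image_of_mem _ hi₂σ
    have hn1 : i₂ ∉ τ₁ := by
      intro hcon
      have : i₂ ∈ τ₁ ∩ τ₂ := Finset.mem_inter.2 ⟨hcon, hi₂⟩
      rw [hdis] at this
      simp at this
    have e1 : S i₁ = va := by
      show (if i₁ ∈ τ₁ then va else if i₁ ∈ τ₂ then vb else 0) = va
      simp [hi₁]
    have e2 : S i₂ = vb := by
      show (if i₂ ∈ τ₁ then va else if i₂ ∈ τ₂ then vb else 0) = vb
      simp [hi₂, hn1]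
    exact span_pair va vb (Or.inl ⟨rfl, rfl⟩) (e1 ▸ mem₁) (e2 ▸ mem₂)


/-- `s(K) ≥ 2` iff condition (S2) holds. -/
theorem stmt_14 (m : ℕ) (K : Set (Finset (Fin m))) (hK : IsSimplicialComplex m K) :
    (∃ S : Matrix (Fin m) (Fin 2) ℤ, CondA m 2 K S) ↔ CondS2 m K :=
  ⟨fun ⟨S, hS⟩ => stmt14_fwd m K hK S hS, stmt14_bwd m K hK⟩
end
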